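/- (Hammersley–Clifford) Let p be a positive joint probability distribution over variables X_V and let G = (V, E) be an undirected graph that is an I-map for p. Then p can be represented as a Gibbs distribution that factorizes over G: there exist a finite family of cliques {D_k} of G, positive potential functions φ_k : val(D_k) → ℝ>0, and a normalizing constant Z > 0 such that p(x) = (1/Z) ∏_k φ_k(x_{D_k}) for all full assignments x. -/
import Mathlib


open Finset

/-- The marginal probability of the event that a full assignment agrees with `x` on `S`. -/
noncomputable def marginal {V : Type} [Fintype V] [DecidableEq V] {val : V → Type}
    [∀ v, Fintype (val v)] [∀ v, DecidableEq (val v)]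
    (p : (∀ v, val v) → ℝ) (S : Finset V) (x : ∀ v, val v) : ℝ :=
  ∑ y : ∀ v, val v, if ∀ v ∈ S, y v = x v then p y else 0

/-- The conditional probability `p(x_S | x_T)`. -/
noncomputable def condProb {V : Type} [Fintype V] [DecidableEq V] {val : V → Type}
    [∀ v, Fintype (val v)] [∀ v, DecidableEq (val v)]
    (p : (∀ v, val v) → ℝ) (S T : Finset V) (x : ∀ v, val v) : ℝ :=
  marginal p (S ∪ T) x / marginal p T x

/-- Conditional independence ⟂(X_A; X_B | X_U). -/
def CondIndep {V : Type} [Fintype V] [DecidableEq V] {val : V → Type}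
    [∀ v, Fintype (val v)] [∀ v, DecidableEq (val v)]
    (p : (∀ v, val v) → ℝ) (A B U : Finset V) : Prop :=
  ∀ x : ∀ v, val v, 0 < marginal p (B ∪ U) x →
    condProb p A (B ∪ U) x = condProb p A U x

/-- `S` separates `A` and `B` in `G`: every path from a vertex of `A` to a vertex of `B`
contains a vertex of `S`. -/
def Separates {V : Type} (G : SimpleGraph V) (A B S : Finset V) : Prop :=
  ∀ a ∈ A, ∀ b ∈ B, ∀ w : G.Walk a b, w.IsPath → ∃ v ∈ w.support, v ∈ S

/-- `G` is an I-map for `p`: every separation in `G` between pairwise disjoint sets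
corresponds to a conditional independence that holds in `p`. -/
def IsIMap {V : Type} [Fintype V] [DecidableEq V] {val : V → Type}
    [∀ v, Fintype (val v)] [∀ v, DecidableEq (val v)]
    (G : SimpleGraph V) (p : (∀ v, val v) → ℝ) : Prop :=
  ∀ A B S : Finset V, Disjoint A B → Disjoint A S → Disjoint B S →
    Separates G A B S → CondIndep p A B S





lemma mobius_inv {V : Type} [DecidableEq V] (A : Finset V) :
    ∀ g : Finset V → ℝ,
      ∑ S ∈ A.powerset, ((-1:ℝ)^S.card * ∑ T ∈ S.powerset, (-1:ℝ)^T.card * g T) = g A := by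
  induction A using Finset.induction_on with
  | empty => intro g; simp
  | @insert a A ha ih =>
    intro g
    rw [Finset.sum_powerset_insert ha, ih g]
    have hstep : ∀ S ∈ A.powerset,
        ((-1:ℝ)^(insert a S).card * ∑ T ∈ (insert a S).powerset, (-1:ℝ)^T.card * g T)
        = -((-1:ℝ)^S.card * ∑ T ∈ S.powerset, (-1:ℝ)^T.card * g T)
          + ((-1:ℝ)^S.card * ∑ T ∈ S.powerset, (-1:ℝ)^T.card * g (insert a T)) := by
      intro S hS
      have haS : a ∉ S := fun h => ha (Finset.mem_powerset.mp hS h)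
      rw [Finset.card_insert_of_notMem haS, Finset.sum_powerset_insert haS]
      have : ∑ T ∈ S.powerset, (-1:ℝ)^(insert a T).card * g (insert a T)
          = ∑ T ∈ S.powerset, -((-1:ℝ)^T.card * g (insert a T)) := by
        refine Finset.sum_congr rfl fun T hT => ?_
        have haT : a ∉ T := fun h => haS (Finset.mem_powerset.mp hT h)
        rw [Finset.card_insert_of_notMem haT]
        ring
      rw [this, Finset.sum_neg_distrib]
      ring
    rw [Finset.sum_congr rfl hstep, Finset.sum_add_distrib, Finset.sum_neg_distrib, ih g,
      ih (fun T => g (insert a T))]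
    ring

section FP
variable {V : Type} [Fintype V] [DecidableEq V] {val : V → Type}
    [∀ v, Fintype (val v)] [∀ v, DecidableEq (val v)]

lemma marginal_congr (p : (∀ v, val v) → ℝ) (S : Finset V) {x y : ∀ v, val v}
    (h : ∀ v ∈ S, x v = y v) : marginal p S x = marginal p S y := by
  unfold marginal
  refine Finset.sum_congr rfl fun z _ => ?_
  have hiff : (∀ v ∈ S, z v = x v) ↔ (∀ v ∈ S, z v = y v) :=
    ⟨fun hz v hv => (hz v hv).trans (h v hv), fun hz v hv => (hz v hv).trans (h v hv).symm⟩
  simp only [hiff]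

lemma marginal_pos (p : (∀ v, val v) → ℝ) (hpos : ∀ x, 0 < p x) (S : Finset V)
    (x : ∀ v, val v) : 0 < marginal p S x := by
  unfold marginal
  refine Finset.sum_pos' (fun y _ => ?_) ⟨x, Finset.mem_univ x, ?_⟩
  · split_ifs
    · exact (hpos y).le
    · exact le_refl 0
  · simp [hpos x]

lemma marginal_univ (p : (∀ v, val v) → ℝ) (x : ∀ v, val v) :
    marginal p univ x = p x := by
  unfold marginal
  rw [Finset.sum_eq_single x]
  · simp
  · intro y _ hy
    rw [if_neg]
    intro hc
    exact hy (funext fun v => hc v (Finset.mem_univ v))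
  · intro h
    exact absurd (Finset.mem_univ x) h

lemma fourpoint (G : SimpleGraph V) (p : (∀ v, val v) → ℝ) (hpos : ∀ x, 0 < p x)
    (hImap : IsIMap G p) {u v : V} (huv : u ≠ v) (hna : ¬ G.Adj u v) :
    ∀ (z : ∀ w, val w) (a : val u) (b : val v),
      p z * p (Function.update (Function.update z u a) v b)
        = p (Function.update z u a) * p (Function.update z v b) := by
  have hsep : Separates G {u} {v} (univ \ {u, v}) := by
    intro a ha b hb w _
    simp only [Finset.mem_singleton] at ha hb
    subst ha; subst hb
    cases w with
    | nil => exact absurd rfl huv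
    | @cons _ c _ h w' =>
      refine ⟨c, by simp [SimpleGraph.Walk.support_cons,
        SimpleGraph.Walk.start_mem_support w'], ?_⟩
      simp only [Finset.mem_sdiff, Finset.mem_univ, Finset.mem_insert, Finset.mem_singleton,
        true_and]
      push_neg
      exact ⟨(G.ne_of_adj h).symm, fun e => hna (e ▸ h)⟩
  have hci : CondIndep p {u} {v} (univ \ {u, v}) := by
    refine hImap _ _ _ ?_ ?_ ?_ hsep
    · simp [Finset.disjoint_left, huv]
    · simp [Finset.disjoint_left]
    · simp [Finset.disjoint_left]
  have hBU : ({v} ∪ (univ \ {u, v}) : Finset V) = univ \ {u} := by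
    ext w
    by_cases hw : w = v <;> simp [hw, huv.symm] <;> tauto
  have hAU : ({u} ∪ (univ \ {u, v}) : Finset V) = univ \ {v} := by
    ext w
    by_cases hw : w = u <;> simp [hw, huv] <;> tauto
  have hA1 : ({u} ∪ (univ \ {u}) : Finset V) = univ := by
    ext w
    by_cases hw : w = u <;> simp [hw]
  have star : ∀ x : ∀ w, val w,
      p x * marginal p (univ \ {u, v}) x
        = marginal p (univ \ {u}) x * marginal p (univ \ {v}) x := by
    intro x
    have h := hci x (by rw [hBU]; exact marginal_pos p hpos _ _)
    unfold condProb at h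
    rw [hBU, hAU, hA1, marginal_univ] at h
    have h1 : marginal p (univ \ {u}) x ≠ 0 := (marginal_pos p hpos _ _).ne'
    have h2 : marginal p (univ \ {u, v}) x ≠ 0 := (marginal_pos p hpos _ _).ne'
    field_simp at h
    linarith [h]
  intro z a b
  set za := Function.update z u a with hza
  set zb := Function.update z v b with hzb
  set zab := Function.update za v b with hzab
  have hagree_uv : ∀ (y y' : ∀ w, val w), (∀ w, w ≠ u → w ≠ v → y w = y' w) →
      marginal p (univ \ {u, v}) y = marginal p (univ \ {u, v}) y' := by
    intro y y' hy
    refine marginal_congr p _ fun w hw => ?_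
    simp only [Finset.mem_sdiff, Finset.mem_univ, Finset.mem_insert, Finset.mem_singleton] at hw
    push_neg at hw
    exact hy w hw.2.1 hw.2.2
  have hagree_u : ∀ (y y' : ∀ w, val w), (∀ w, w ≠ u → y w = y' w) →
      marginal p (univ \ {u}) y = marginal p (univ \ {u}) y' := by
    intro y y' hy
    refine marginal_congr p _ fun w hw => ?_
    simp only [Finset.mem_sdiff, Finset.mem_univ, Finset.mem_singleton] at hw
    exact hy w hw.2
  have hagree_v : ∀ (y y' : ∀ w, val w), (∀ w, w ≠ v → y w = y' w) →
      marginal p (univ \ {v}) y = marginal p (univ \ {v}) y' := by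
    intro y y' hy
    refine marginal_congr p _ fun w hw => ?_
    simp only [Finset.mem_sdiff, Finset.mem_univ, Finset.mem_singleton] at hw
    exact hy w hw.2
  -- abbreviations
  set S0 := marginal p (univ \ {u, v}) z with hS0
  set A1 := marginal p (univ \ {u}) z with hA1'
  set B1 := marginal p (univ \ {v}) z with hB1'
  set Am := marginal p (univ \ {u}) zb with hAm
  set Bm := marginal p (univ \ {v}) za with hBm
  have e1 : p z * S0 = A1 * B1 := star z
  have ezab_s : marginal p (univ \ {u, v}) zab = S0 :=
    hagree_uv _ _ (fun w hwu hwv => by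
      rw [hzab, Function.update_of_ne hwv, hza, Function.update_of_ne hwu])
  have ezab_a : marginal p (univ \ {u}) zab = Am :=
    hagree_u _ _ (fun w hwu => by
      by_cases hwv : w = v
      · subst hwv; rw [hzab, hzb, Function.update_self, Function.update_self]
      · rw [hzab, Function.update_of_ne hwv, hza, Function.update_of_ne hwu, hzb,
          Function.update_of_ne hwv])
  have ezab_b : marginal p (univ \ {v}) zab = Bm :=
    hagree_v _ _ (fun w hwv => by rw [hzab, Function.update_of_ne hwv])
  have e2 : p zab * S0 = Am * Bm := by
    have := star zab
    rw [ezab_s, ezab_a, ezab_b] at this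
    exact this
  have eza_s : marginal p (univ \ {u, v}) za = S0 :=
    hagree_uv _ _ (fun w hwu _ => by rw [hza, Function.update_of_ne hwu])
  have eza_a : marginal p (univ \ {u}) za = A1 :=
    hagree_u _ _ (fun w hwu => by rw [hza, Function.update_of_ne hwu])
  have e3 : p za * S0 = A1 * Bm := by
    have := star za
    rw [eza_s, eza_a] at this
    exact this
  have ezb_s : marginal p (univ \ {u, v}) zb = S0 :=
    hagree_uv _ _ (fun w _ hwv => by rw [hzb, Function.update_of_ne hwv])
  have ezb_b : marginal p (univ \ {v}) zb = B1 :=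
    hagree_v _ _ (fun w hwv => by rw [hzb, Function.update_of_ne hwv])
  have e4 : p zb * S0 = Am * B1 := by
    have := star zb
    rw [ezb_s, ezb_b] at this
    exact this
  have hS0ne : S0 ≠ 0 := (marginal_pos p hpos _ _).ne'
  have h5 : (p z * p zab) * (S0 * S0) = (p za * p zb) * (S0 * S0) := by
    calc (p z * p zab) * (S0 * S0) = (p z * S0) * (p zab * S0) := by ring
    _ = (A1 * B1) * (Am * Bm) := by rw [e1, e2]
    _ = (A1 * Bm) * (Am * B1) := by ring
    _ = (p za * S0) * (p zb * S0) := by rw [e3, e4]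
    _ = (p za * p zb) * (S0 * S0) := by ring
  exact mul_right_cancel₀ (mul_ne_zero hS0ne hS0ne) h5

end FP
section Psi
variable {V : Type} [Fintype V] [DecidableEq V] {val : V → Type}
    [∀ v, Fintype (val v)] [∀ v, DecidableEq (val v)]

/-- Clamp `x` to the default `x0` off `T`. -/
def clampA (x0 x : ∀ v, val v) (T : Finset V) : ∀ v, val v :=
  fun v => if v ∈ T then x v else x0 v

lemma clampA_univ (x0 x : ∀ v, val v) : clampA x0 x univ = x :=
  funext fun v => if_pos (Finset.mem_univ v)

lemma clampA_insert (x0 x : ∀ v, val v) {u : V} {T : Finset V} (hu : u ∉ T) :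
    clampA x0 x (insert u T) = Function.update (clampA x0 x T) u (x u) := by
  funext w
  by_cases hw : w = u
  · subst hw
    rw [Function.update_self]
    simp [clampA]
  · rw [Function.update_of_ne hw]
    simp [clampA, Finset.mem_insert, hw]

lemma clampA_congr (x0 : ∀ v, val v) {x y : ∀ v, val v} {S T : Finset V} (hT : T ⊆ S)
    (h : ∀ v ∈ S, x v = y v) : clampA x0 x T = clampA x0 y T := by
  funext v
  by_cases hv : v ∈ T
  · simp [clampA, hv, h v (hT hv)]
  · simp [clampA, hv]

/-- The (log-domain) canonical potential of scope `S`. -/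
noncomputable def psiA (p : (∀ v, val v) → ℝ) (x0 : ∀ v, val v) (S : Finset V)
    (x : ∀ v, val v) : ℝ :=
  (-1:ℝ)^S.card * ∑ T ∈ S.powerset, (-1:ℝ)^T.card * Real.log (p (clampA x0 x T))

lemma psiA_congr (p : (∀ v, val v) → ℝ) (x0 : ∀ v, val v) {S : Finset V} {x y : ∀ v, val v}
    (h : ∀ v ∈ S, x v = y v) : psiA p x0 S x = psiA p x0 S y := by
  unfold psiA
  congr 1
  refine Finset.sum_congr rfl fun T hT => ?_
  rw [clampA_congr x0 (Finset.mem_powerset.mp hT) h]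

lemma sum_psiA (p : (∀ v, val v) → ℝ) (x0 x : ∀ v, val v) :
    ∑ S ∈ (univ : Finset V).powerset, psiA p x0 S x = Real.log (p x) := by
  have := mobius_inv (univ : Finset V) (fun T => Real.log (p (clampA x0 x T)))
  rw [clampA_univ] at this
  exact this

lemma psiA_eq_zero (G : SimpleGraph V) (p : (∀ v, val v) → ℝ) (hpos : ∀ x, 0 < p x)
    (hfp : ∀ (u v : V), u ≠ v → ¬ G.Adj u v → ∀ (z : ∀ w, val w) (a : val u) (b : val v),
      p z * p (Function.update (Function.update z u a) v b)
        = p (Function.update z u a) * p (Function.update z v b))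
    (x0 x : ∀ v, val v) {S : Finset V} (hS : ¬ G.IsClique (S : Set V)) :
    psiA p x0 S x = 0 := by
  rw [SimpleGraph.isClique_iff, Set.Pairwise] at hS
  push_neg at hS
  obtain ⟨u, hu, v, hv, hne, hnadj⟩ := hS
  rw [Finset.mem_coe] at hu hv
  have hvS : v ∈ S.erase u := Finset.mem_erase.mpr ⟨hne.symm, hv⟩
  set S' := (S.erase u).erase v with hS'def
  have h1 : insert v S' = S.erase u := Finset.insert_erase hvS
  have h2 : S = insert u (insert v S') := by rw [h1, Finset.insert_erase hu]
  have hunotin : u ∉ insert v S' := by rw [h1]; exact Finset.notMem_erase u S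
  have hvnotin : v ∉ S' := Finset.notMem_erase v _
  have hsum : ∑ T ∈ S.powerset, (-1:ℝ)^T.card * Real.log (p (clampA x0 x T)) = 0 := by
    rw [h2, Finset.sum_powerset_insert hunotin, Finset.sum_powerset_insert hvnotin,
      Finset.sum_powerset_insert hvnotin]
    have hmain : ∀ T ∈ S'.powerset,
        ((-1:ℝ)^T.card * Real.log (p (clampA x0 x T))
          + (-1:ℝ)^(insert v T).card * Real.log (p (clampA x0 x (insert v T))))
        + ((-1:ℝ)^(insert u T).card * Real.log (p (clampA x0 x (insert u T)))
          + (-1:ℝ)^(insert u (insert v T)).card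
              * Real.log (p (clampA x0 x (insert u (insert v T))))) = 0 := by
      intro T hT
      have hTsub : T ⊆ S' := Finset.mem_powerset.mp hT
      have huT : u ∉ T := fun h => hunotin (Finset.mem_insert_of_mem (hTsub h))
      have hvT : v ∉ T := fun h => hvnotin (hTsub h)
      have huvT : u ∉ insert v T := by
        simp only [Finset.mem_insert]
        push_neg
        exact ⟨hne, huT⟩
      rw [Finset.card_insert_of_notMem hvT, Finset.card_insert_of_notMem huT,
        Finset.card_insert_of_notMem huvT, Finset.card_insert_of_notMem hvT,
        clampA_insert x0 x huvT, clampA_insert x0 x hvT, clampA_insert x0 x huT,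
        Function.update_comm hne.symm]
      set z := clampA x0 x T with hz
      have key := hfp u v hne hnadj z (x u) (x v)
      have l1 := congrArg Real.log key
      rw [Real.log_mul (hpos _).ne' (hpos _).ne',
        Real.log_mul (hpos _).ne' (hpos _).ne'] at l1
      linear_combination ((-1:ℝ)^T.card) * l1
    calc (∑ T ∈ S'.powerset, (-1:ℝ)^T.card * Real.log (p (clampA x0 x T))
            + ∑ T ∈ S'.powerset,
              (-1:ℝ)^(insert v T).card * Real.log (p (clampA x0 x (insert v T))))
          + (∑ T ∈ S'.powerset,
              (-1:ℝ)^(insert u T).card * Real.log (p (clampA x0 x (insert u T)))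
            + ∑ T ∈ S'.powerset, (-1:ℝ)^(insert u (insert v T)).card
                * Real.log (p (clampA x0 x (insert u (insert v T)))))
        = ∑ T ∈ S'.powerset,
            (((-1:ℝ)^T.card * Real.log (p (clampA x0 x T))
              + (-1:ℝ)^(insert v T).card * Real.log (p (clampA x0 x (insert v T))))
            + ((-1:ℝ)^(insert u T).card * Real.log (p (clampA x0 x (insert u T)))
              + (-1:ℝ)^(insert u (insert v T)).card
                  * Real.log (p (clampA x0 x (insert u (insert v T)))))) := by
          simp only [Finset.sum_add_distrib]
      _ = 0 := Finset.sum_eq_zero hmain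
  unfold psiA
  rw [hsum, mul_zero]

end Psi

/-- Hammersley–Clifford: a positive distribution for which `G` is an I-map can be
represented as a Gibbs distribution that factorizes over `G`: there are cliques `D_k`
of `G`, positive potentials `φ_k` (depending only on their scopes `D_k`), and a
constant `Z > 0` with `p(x) = (1/Z) ∏_k φ_k(x_{D_k})`. -/
theorem hammersley_clifford
    {V : Type} [Fintype V] [DecidableEq V] {val : V → Type}
    [∀ v, Fintype (val v)] [∀ v, DecidableEq (val v)] [∀ v, Nonempty (val v)]
    (G : SimpleGraph V)
    (p : (∀ v, val v) → ℝ)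
    (hpos : ∀ x, 0 < p x) (hp1 : ∑ x : ∀ v, val v, p x = 1)
    (hImap : IsIMap G p) :
    ∃ (m : ℕ) (D : Fin m → Finset V) (φ : Fin m → (∀ v, val v) → ℝ) (Z : ℝ),
      0 < Z ∧
      (∀ k, G.IsClique (D k : Set V)) ∧
      (∀ k x, 0 < φ k x) ∧
      (∀ k x y, (∀ v ∈ D k, x v = y v) → φ k x = φ k y) ∧
      (∀ x, p x = (1 / Z) * ∏ k, φ k x) := by
  classical
  have x0 : ∀ v, val v := fun v => Classical.arbitrary (val v)
  have hfp : ∀ (u v : V), u ≠ v → ¬ G.Adj u v → ∀ (z : ∀ w, val w) (a : val u) (b : val v),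
      p z * p (Function.update (Function.update z u a) v b)
        = p (Function.update z u a) * p (Function.update z v b) :=
    fun u v huv hna => fourpoint G p hpos hImap huv hna
  let e : Fin (Fintype.card (Finset V)) ≃ Finset V := (Fintype.equivFin (Finset V)).symm
  refine ⟨Fintype.card (Finset V),
    fun k => if G.IsClique ((e k : Finset V) : Set V) then e k else ∅,
    fun k x => if G.IsClique ((e k : Finset V) : Set V) then Real.exp (psiA p x0 (e k) x) else 1,
    1, one_pos, ?_, ?_, ?_, ?_⟩
  · intro k
    by_cases h : G.IsClique ((e k : Finset V) : Set V)
    · simpa [h] using h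
    · simp [h]
  · intro k x
    by_cases h : G.IsClique ((e k : Finset V) : Set V) <;> simp [h, Real.exp_pos]
  · intro k x y hxy
    by_cases h : G.IsClique ((e k : Finset V) : Set V)
    · simp only [h, if_true] at hxy ⊢
      rw [psiA_congr p x0 hxy]
    · simp [h]
  · intro x
    have hprod : ∏ k, (if G.IsClique ((e k : Finset V) : Set V)
          then Real.exp (psiA p x0 (e k) x) else 1)
        = ∏ S : Finset V, (if G.IsClique (S : Set V) then Real.exp (psiA p x0 S x) else 1) :=
      Equiv.prod_comp e
        (fun S : Finset V => if G.IsClique (S : Set V) then Real.exp (psiA p x0 S x) else 1)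
    have h2 : ∀ S : Finset V,
        (if G.IsClique (S : Set V) then Real.exp (psiA p x0 S x) else 1)
          = Real.exp (psiA p x0 S x) := by
      intro S
      by_cases h : G.IsClique (S : Set V)
      · rw [if_pos h]
      · rw [if_neg h, psiA_eq_zero G p hpos hfp x0 x h, Real.exp_zero]
    rw [hprod, Finset.prod_congr rfl (fun S _ => h2 S), ← Real.exp_sum]
    have h3 : ∑ S : Finset V, psiA p x0 S x = Real.log (p x) := by
      rw [← Finset.powerset_univ]
      exact sum_psiA p x0 x
    rw [h3, Real.exp_log (hpos x), one_div_one, one_mul]
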